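/- arXiv:2301.01880 — 3 statements merged into one kernel-verified Lean document; each statement's English description precedes it below -/
import Mathlib

section
/- Let A ∈ GL₂(ℝ) have finite order, determinant 1, and preserve a lattice L = ℤa + ℤb spanned by two linearly independent vectors a, b ∈ ℝ². Then the order of A is 1, 2, 3, 4, or 6. -/
/-
In the basis `a, b` of the lattice, `A` has integer entries, so its trace `t` is an integer.
If `|t| > 2`, the characteristic polynomial `X² - tX + 1` has a real root `μ ≠ ±1`, which is an
eigenvalue of `A` and so a root of unity: impossible. For `t = -1, 0, 1` the characteristic
polynomial is the cyclotomic polynomial `Φ₃, Φ₄, Φ₆`, so Cayley–Hamilton gives `A⁶ = 1` or `A⁴ = 1`.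
For `t = ±2` it is `(X ∓ 1)²`, so `A²` is unipotent of finite order, hence `A² = 1`.
-/

open Polynomial Module
open scoped Matrix

instance Matrix.instIsAddTorsionFree {m n α : Type*} [AddMonoid α] [IsAddTorsionFree α] :
    IsAddTorsionFree (Matrix m n α) :=
  inferInstanceAs (IsAddTorsionFree (m → n → α))

theorem LinearMap.trace_mem_range_algebraMap {ι R S M : Type*} [Fintype ι] [DecidableEq ι]
    [CommRing R] [IsDomain R] [CommRing S] [Nontrivial S] [Algebra R S] [AddCommGroup M]
    [Module S M] [Module R M] [IsScalarTower R S M] [Module.IsTorsionFree R S]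
    (b : Basis ι S M) (f : M →ₗ[S] M) (hf : ∀ i, f (b i) ∈ Submodule.span R (Set.range b)) :
    LinearMap.trace S M f ∈ Set.range (algebraMap R S) := by
  rw [LinearMap.trace_eq_matrix_trace S b, Matrix.trace, ← RingHom.coe_range]
  exact Subring.sum_mem _ fun i _ ↦ by
    simpa [LinearMap.toMatrix_apply] using (b.mem_span_iff_repr_mem R _).mp (hf i) i

theorem Matrix.trace_mem_range_algebraMap {ι R K : Type*} [Fintype ι] [DecidableEq ι]
    [CommRing R] [IsDomain R] [Field K] [Algebra R K] [Module.IsTorsionFree R K]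
    {A : Matrix ι ι K} {v : ι → ι → K} (hv : LinearIndependent K v)
    (hA : ∀ i, A *ᵥ v i ∈ Submodule.span R (Set.range v)) :
    A.trace ∈ Set.range (algebraMap R K) := by
  rw [← trace_toLin'_eq]
  refine LinearMap.trace_mem_range_algebraMap (basisOfLinearIndependentOfCardEqFinrank' v hv
    (by simp)) _ fun i ↦ ?_
  simpa only [coe_basisOfLinearIndependentOfCardEqFinrank', toLin'_apply] using hA i

theorem Module.End.HasEigenvalue.pow_eq_one {K V : Type*} [Field K] [AddCommGroup V]
    [Module K V] {f : End K V} {μ : K} (hμ : f.HasEigenvalue μ) {n : ℕ} (hf : f ^ n = 1) :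
    μ ^ n = 1 := by
  obtain ⟨v, hv⟩ := hμ.exists_hasEigenvector
  have hfix : v = μ ^ n • v := by simpa [hf] using hv.pow_apply n
  have hzero : (μ ^ n - 1) • v = 0 := by rw [sub_smul, ← hfix, one_smul, sub_self]
  exact sub_eq_zero.mp ((smul_eq_zero.mp hzero).resolve_right hv.2)

theorem Matrix.abs_trace_le_two_of_isOfFinOrder {A : Matrix (Fin 2) (Fin 2) ℝ} (hdet : A.det = 1)
    (hA : IsOfFinOrder A) : |A.trace| ≤ 2 := by
  by_contra! h
  set t := A.trace
  have hdisc : 0 ≤ t ^ 2 - 4 := by nlinarith [sq_abs t]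
  obtain ⟨μ, hroot⟩ : ∃ μ : ℝ, μ ^ 2 - t * μ + 1 = 0 :=
    ⟨(t + √(t ^ 2 - 4)) / 2, by linear_combination (1 / 4) * Real.sq_sqrt hdisc⟩
  have heig : End.HasEigenvalue (toLin' A) μ := by
    rw [End.hasEigenvalue_iff_isRoot_charpoly, charpoly_toLin', charpoly_fin_two]
    simpa [hdet] using hroot
  obtain ⟨k, hk, hAk⟩ := isOfFinOrder_iff_pow_eq_one.mp hA
  have hμk : μ ^ k = 1 := heig.pow_eq_one (by rw [← toLin'_pow, hAk, toLin'_one, End.one_eq_id])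
  have hμ : |μ| = 1 :=
    (pow_eq_one_iff_of_nonneg (abs_nonneg μ) hk.ne').mp (by rw [← abs_pow, hμk, abs_one])
  have hμ2 : μ ^ 2 = 1 := by rw [← sq_abs, hμ, one_pow]
  have ht2 : t ^ 2 = 4 := by linear_combination (-t ^ 2 + t * μ + 2) * hμ2 - (t * μ + 2) * hroot
  nlinarith [sq_abs t]

theorem eq_one_of_sq_sub_one_eq_zero_of_pow_eq_one {R : Type*} [Ring R] [IsAddTorsionFree R]
    {y : R} (hy : (y - 1) ^ 2 = 0) {n : ℕ} (hn : n ≠ 0) (hyn : y ^ n = 1) : y = 1 := by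
  set N := y - 1
  have hpow : ∀ m : ℕ, (1 + N) ^ m = 1 + m • N := by
    intro m
    induction m with
    | zero => simp
    | succ m ih =>
      calc (1 + N) ^ (m + 1) = (1 + m • N) * (1 + N) := by rw [pow_succ, ih]
        _ = 1 + m • N + N + m • (N * N) := by noncomm_ring
        _ = 1 + (m + 1) • N := by rw [← sq, hy, smul_zero, add_zero, succ_nsmul, add_assoc]
  rw [← add_sub_cancel 1 y, hpow, add_eq_left] at hyn
  exact sub_eq_zero.mp ((smul_eq_zero.mp hyn).resolve_left hn)

theorem Polynomial.pow_eq_one_of_aeval_eq_zero_of_dvd {R : Type*} [Ring R] {x : R} {p : ℤ[X]}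
    (hx : aeval x p = 0) {n : ℕ} (hp : p ∣ X ^ n - 1) : x ^ n = 1 := by
  simpa [sub_eq_zero] using aeval_eq_zero_of_dvd_aeval_eq_zero hp hx

theorem pow_four_eq_one_or_pow_six_eq_one {R : Type*} [Ring R] [IsAddTorsionFree R] {x : R}
    (hx : IsOfFinOrder x) {t : ℤ} (ht : |t| ≤ 2) (hroot : aeval x (X ^ 2 - C t * X + 1) = 0) :
    x ^ 4 = 1 ∨ x ^ 6 = 1 := by
  have of_dvd_sq : X ^ 2 - C t * X + 1 ∣ (X ^ 2 - 1) ^ 2 → x ^ 4 = 1 := by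
    intro hdvd
    obtain ⟨k, hk, hxk⟩ := isOfFinOrder_iff_pow_eq_one.mp hx
    have hsq : (x ^ 2 - 1) ^ 2 = 0 := by simpa using aeval_eq_zero_of_dvd_aeval_eq_zero hdvd hroot
    have hx2 : x ^ 2 = 1 := eq_one_of_sq_sub_one_eq_zero_of_pow_eq_one hsq hk.ne'
      (by rw [← pow_mul, mul_comm, pow_mul, hxk, one_pow])
    rw [show 4 = 2 * 2 from rfl, pow_mul, hx2, one_pow]
  obtain ⟨ht₁, ht₂⟩ := abs_le.mp ht
  interval_cases t
  · exact .inl (of_dvd_sq ⟨(X - 1) ^ 2, by simp; ring⟩)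
  · exact .inr (pow_eq_one_of_aeval_eq_zero_of_dvd hroot ⟨(X - 1) * (X ^ 3 + 1), by simp; ring⟩)
  · exact .inl (pow_eq_one_of_aeval_eq_zero_of_dvd hroot ⟨X ^ 2 - 1, by simp; ring⟩)
  · exact .inr (pow_eq_one_of_aeval_eq_zero_of_dvd hroot ⟨(X + 1) * (X ^ 3 - 1), by simp; ring⟩)
  · exact .inl (of_dvd_sq ⟨(X + 1) ^ 2, by simp; ring⟩)

theorem Nat.eq_one_or_two_or_three_or_four_or_six_of_dvd {m : ℕ} (h : m ∣ 4 ∨ m ∣ 6) :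
    m = 1 ∨ m = 2 ∨ m = 3 ∨ m = 4 ∨ m = 6 := by
  rcases h with h | h <;> have := Nat.le_of_dvd (by norm_num) h <;> interval_cases m <;> omega

theorem stmt5 (A : Matrix (Fin 2) (Fin 2) ℝ) (hdet : A.det = 1)
    (hfin : ∃ k : ℕ, 1 ≤ k ∧ A ^ k = 1)
    (a b : Fin 2 → ℝ) (hab : LinearIndependent ℝ ![a, b])
    (L : Set (Fin 2 → ℝ)) (hL : L = {v | ∃ m l : ℤ, v = m • a + l • b})
    (hpres : A.mulVec '' L = L) :
    orderOf A = 1 ∨ orderOf A = 2 ∨ orderOf A = 3 ∨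
      orderOf A = 4 ∨ orderOf A = 6 := by
  have hspan : L ⊆ Submodule.span ℤ (Set.range ![a, b]) := by
    rw [hL]
    rintro _ ⟨m, l, rfl⟩
    exact add_mem (zsmul_mem (Submodule.subset_span (Set.mem_range_self (f := ![a, b]) 0)) m)
      (zsmul_mem (Submodule.subset_span (Set.mem_range_self (f := ![a, b]) 1)) l)
  have hbasis : ∀ i, ![a, b] i ∈ L := by
    rw [hL]
    intro i
    fin_cases i
    exacts [⟨1, 0, by simp⟩, ⟨0, 1, by simp⟩]
  obtain ⟨t, ht⟩ := A.trace_mem_range_algebraMap hab fun i ↦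
    hspan (hpres ▸ Set.mem_image_of_mem _ (hbasis i))
  have hA : IsOfFinOrder A := isOfFinOrder_iff_pow_eq_one.mpr hfin
  have hroot : aeval A (X ^ 2 - C t * X + 1) = 0 := by
    have := A.aeval_self_charpoly
    rw [Matrix.charpoly_fin_two, hdet, ← ht] at this
    simpa using this
  have htr : |t| ≤ 2 := by
    have := Matrix.abs_trace_le_two_of_isOfFinOrder hdet hA
    rw [← ht, eq_intCast] at this
    exact_mod_cast this
  refine Nat.eq_one_or_two_or_three_or_four_or_six_of_dvd ?_
  exact (pow_four_eq_one_or_pow_six_eq_one hA htr hroot).imp orderOf_dvd_of_pow_eq_one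
    orderOf_dvd_of_pow_eq_one
end

section
/- In the geometric representation of a Coxeter system, if m = m(s,s') < ∞, then the product σ_s σ_{s'} restricted to the plane spanned by α_s and α_{s'} is a rotation by angle 2π/m, and hence has order exactly m. -/
/-!
In the basis `α_s, α_{s'}`, the map `v ↦ v.1 • u - v.2` with `u = exp (i π / m)` identifies
`(ℝ², B)` isometrically with `ℂ`: the images `u` and `-1` of the roots are unit vectors at angle
`π - π / m`. Under this identification `σ_s σ_{s'}` is multiplication by `u ^ 2 = exp (2 π i / m)`,
a primitive `m`-th root of unity, so its `k`-th iterate is the identity exactly when `m ∣ k`.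
-/

open Real Function

/-- The matrix of `σ_s σ_{s'}` in the basis `α_s, α_{s'}` when `B (α_s, α_{s'}) = -c`. -/
def reflectionProduct (c : ℝ) (v : ℝ × ℝ) : ℝ × ℝ :=
  ((4 * c ^ 2 - 1) * v.1 - 2 * c * v.2, 2 * c * v.1 - v.2)

theorem comp_reflections_eq_reflectionProduct (c : ℝ) (B : (ℝ × ℝ) → (ℝ × ℝ) → ℝ)
    (hB : ∀ v w : ℝ × ℝ, B v w = v.1 * w.1 + v.2 * w.2 - c * (v.1 * w.2 + v.2 * w.1))
    (σa σb : (ℝ × ℝ) → (ℝ × ℝ))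
    (hσa : ∀ v : ℝ × ℝ, σa v = v - (2 * B ((1 : ℝ), (0 : ℝ)) v) • ((1 : ℝ), (0 : ℝ)))
    (hσb : ∀ v : ℝ × ℝ, σb v = v - (2 * B ((0 : ℝ), (1 : ℝ)) v) • ((0 : ℝ), (1 : ℝ))) :
    σa ∘ σb = reflectionProduct c := by
  funext v
  simp only [comp_apply, hσa, hσb, hB, reflectionProduct, Prod.ext_iff, Prod.smul_fst,
    Prod.smul_snd, Prod.fst_sub, Prod.snd_sub, smul_eq_mul]
  constructor <;> ring

theorem reflectionProduct_trace (c : ℝ) :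
    (reflectionProduct c (1, 0)).1 + (reflectionProduct c (0, 1)).2 = 4 * c ^ 2 - 2 := by
  simp only [reflectionProduct]
  ring

def planeEmbedding (u : ℂ) (v : ℝ × ℝ) : ℂ := v.1 * u - v.2

theorem planeEmbedding_injective {u : ℂ} (hu : u.im ≠ 0) : Injective (planeEmbedding u) := by
  intro v w h
  have him : v.1 * u.im = w.1 * u.im := by simpa [planeEmbedding] using congrArg Complex.im h
  have h1 : v.1 = w.1 := mul_right_cancel₀ hu him
  have hre : v.1 * u.re - v.2 = w.1 * u.re - w.2 := by
    simpa [planeEmbedding] using congrArg Complex.re h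
  exact Prod.ext h1 (by rw [h1] at hre; linarith)

theorem semiconj_planeEmbedding_reflectionProduct {u : ℂ} (hu : u ≠ 0) {c : ℝ}
    (hc : 2 * (c : ℂ) = u + u⁻¹) :
    Semiconj (planeEmbedding u) (reflectionProduct c) (u ^ 2 * ·) := by
  intro v
  have hc' : (c : ℂ) = (u + u⁻¹) / 2 := by rw [← hc]; ring
  simp only [planeEmbedding, reflectionProduct]
  push_cast
  rw [hc']
  field_simp
  ring

theorem iterate_eq_id_iff_dvd_of_semiconj {X M : Type*} [CommMonoidWithZero M] [IsCancelMulZero M]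
    {f : X → X} {φ : X → M} {ζ : M} {m : ℕ} (hζ : IsPrimitiveRoot ζ m) (hφ : Injective φ)
    (hf : Semiconj φ f (ζ * ·)) {x₀ : X} (hx₀ : φ x₀ ≠ 0) (k : ℕ) :
    f^[k] = id ↔ m ∣ k := by
  have hfk : ∀ x, φ (f^[k] x) = ζ ^ k * φ x := fun x => by
    rw [(hf.iterate_right k).eq x, mul_left_iterate]
  rw [← hζ.pow_eq_one_iff_dvd]
  constructor
  · intro hk
    have h := hfk x₀
    rw [hk, id_eq] at h
    exact (mul_eq_right₀ hx₀).mp h.symm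
  · intro hk
    funext x
    exact hφ (by rw [hfk, hk, one_mul, id_eq])

theorem stmt13 (m : ℕ) (hm : 2 ≤ m)
    (B : (ℝ × ℝ) → (ℝ × ℝ) → ℝ)
    (hB : ∀ v w : ℝ × ℝ,
      B v w = v.1 * w.1 + v.2 * w.2
        - Real.cos (π / m) * (v.1 * w.2 + v.2 * w.1))
    (σa σb f : (ℝ × ℝ) → (ℝ × ℝ))
    (hσa : ∀ v : ℝ × ℝ, σa v = v - (2 * B ((1 : ℝ), (0 : ℝ)) v) • ((1 : ℝ), (0 : ℝ)))
    (hσb : ∀ v : ℝ × ℝ, σb v = v - (2 * B ((0 : ℝ), (1 : ℝ)) v) • ((0 : ℝ), (1 : ℝ)))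
    (hf : f = σa ∘ σb) :
    (f (1, 0)).1 + (f (0, 1)).2 = 2 * Real.cos (2 * π / m) ∧
      f^[m] = id ∧ ∀ k : ℕ, 0 < k → k < m → f^[k] ≠ id := by
  rw [hf, comp_reflections_eq_reflectionProduct _ B hB σa σb hσa hσb]
  set u := Complex.exp ((π / m : ℝ) * Complex.I) with hu
  have hu_im : u.im ≠ 0 := by
    rw [hu, Complex.exp_ofReal_mul_I_im]
    refine (sin_pos_of_pos_of_lt_pi (by positivity) (div_lt_self pi_pos ?_)).ne'
    exact_mod_cast hm
  have hc : 2 * ((cos (π / m) : ℝ) : ℂ) = u + u⁻¹ := by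
    rw [Complex.ofReal_cos, Complex.cos, hu, ← Complex.exp_neg]
    ring_nf
  have hζ : IsPrimitiveRoot (u ^ 2) m := by
    rw [hu, ← Complex.exp_nat_mul]
    convert Complex.isPrimitiveRoot_exp m (by omega) using 2
    push_cast
    ring
  have horder := iterate_eq_id_iff_dvd_of_semiconj hζ (planeEmbedding_injective hu_im)
    (semiconj_planeEmbedding_reflectionProduct (Complex.exp_ne_zero _) hc)
    (x₀ := (1, 0)) (by simp [planeEmbedding, hu])
  refine ⟨?_, (horder m).mpr dvd_rfl, fun k hk hkm hid => ?_⟩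
  · rw [reflectionProduct_trace, mul_div_assoc, cos_two_mul]
    ring
  · exact hk.ne' (Nat.eq_zero_of_dvd_of_lt ((horder k).mp hid) hkm)
end

section
/- The only quadruples of integers (k₁,k₂,k₃,k₄) with each kᵢ ≥ 3, such that both {k₁,k₂,k₃} and {k₂,k₃,k₄} lie among the six Schläfli symbols {(3,3,3),(3,3,4),(3,3,5),(3,4,3),(4,3,3),(5,3,3)}, and satisfying cos²(π/k₂)/cos²(θ₁) + cos²(π/k₃)/sin²(π/k₄) = 1 with θ₁ = π/2 − π/k₁, are (3,3,4,3), (3,4,3,3), and (4,3,3,4). -/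
/-!
Since `cos (π/2 - π/k₁) = sin (π/k₁)`, the equation reads `t k₁ k₂ + t k₄ k₃ = 1` with
`t p q = cos² (π/q) / sin² (π/p)`. The containment conditions leave only the pairs
`(3,3), (3,4), (4,3), (5,3)` for `(k₁,k₂)` and `(k₄,k₃)`, on which `t` takes the values
`1/3, 2/3, 1/2` and `(5 + √5)/10 > 2/3`; a sum of two of these equals `1` only as
`1/3 + 2/3` or `1/2 + 1/2`.
-/

open Real

noncomputable def schlafliTerm (p q : ℕ) : ℝ := cos (π / q) ^ 2 / sin (π / p) ^ 2

lemma sin_sq_pi_div_five_lt : sin (π / 5) ^ 2 < 3 / 8 := by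
  have h2 : (2 : ℝ) < √5 := (lt_sqrt (by norm_num)).2 (by norm_num)
  rw [sin_sq, cos_pi_div_five]
  nlinarith [sq_sqrt (show (0 : ℝ) ≤ 5 by norm_num)]

lemma schlafliTerm_three_three : schlafliTerm 3 3 = 1 / 3 := by
  norm_num [schlafliTerm, cos_pi_div_three, sin_pi_div_three, div_pow]

lemma schlafliTerm_three_four : schlafliTerm 3 4 = 2 / 3 := by
  norm_num [schlafliTerm, cos_pi_div_four, sin_pi_div_three, div_pow]

lemma schlafliTerm_four_three : schlafliTerm 4 3 = 1 / 2 := by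
  norm_num [schlafliTerm, cos_pi_div_three, sin_pi_div_four, div_pow]

lemma two_thirds_lt_schlafliTerm_five_three : 2 / 3 < schlafliTerm 5 3 := by
  have hpos : 0 < sin (π / 5) ^ 2 := by
    have := sin_pos_of_pos_of_lt_pi (by positivity : 0 < π / 5) (by linarith [pi_pos])
    positivity
  have hlt := sin_sq_pi_div_five_lt
  rw [schlafliTerm, Nat.cast_ofNat, Nat.cast_ofNat, cos_pi_div_three, lt_div_iff₀ hpos]
  linarith

theorem stmt18 (k1 k2 k3 k4 : ℕ) :
    (3 ≤ k1 ∧ 3 ≤ k2 ∧ 3 ≤ k3 ∧ 3 ≤ k4 ∧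
      (k1, k2, k3) ∈ ({(3,3,3), (3,3,4), (3,3,5), (3,4,3), (4,3,3), (5,3,3)} :
        Set (ℕ × ℕ × ℕ)) ∧
      (k2, k3, k4) ∈ ({(3,3,3), (3,3,4), (3,3,5), (3,4,3), (4,3,3), (5,3,3)} :
        Set (ℕ × ℕ × ℕ)) ∧
      Real.cos (π / k2) ^ 2 / Real.cos (π / 2 - π / k1) ^ 2
        + Real.cos (π / k3) ^ 2 / Real.sin (π / k4) ^ 2 = 1) ↔
    (k1, k2, k3, k4) ∈ ({(3,3,4,3), (3,4,3,3), (4,3,3,4)} :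
      Set (ℕ × ℕ × ℕ × ℕ)) := by
  have hterms : cos (π / k2) ^ 2 / cos (π / 2 - π / k1) ^ 2
      + cos (π / k3) ^ 2 / sin (π / k4) ^ 2 = schlafliTerm k1 k2 + schlafliTerm k4 k3 := by
    rw [cos_pi_div_two_sub]; rfl
  have h53 := two_thirds_lt_schlafliTerm_five_three
  rw [hterms]
  simp only [Set.mem_insert_iff, Set.mem_singleton_iff, Prod.mk.injEq]
  constructor
  · rintro ⟨-, -, -, -, h123, h234, heq⟩
    rcases h123 with ⟨rfl, rfl, rfl⟩ | ⟨rfl, rfl, rfl⟩ | ⟨rfl, rfl, rfl⟩ | ⟨rfl, rfl, rfl⟩ |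
        ⟨rfl, rfl, rfl⟩ | ⟨rfl, rfl, rfl⟩ <;>
      rcases h234 with ⟨h2, h3, rfl⟩ | ⟨h2, h3, rfl⟩ | ⟨h2, h3, rfl⟩ | ⟨h2, h3, rfl⟩ |
        ⟨h2, h3, rfl⟩ | ⟨h2, h3, rfl⟩ <;>
      -- `omega` rules out the incompatible chains and closes the three solutions;
      -- the other eight chains contradict `heq`.
      first
        | omega
        | (norm_num [schlafliTerm_three_three, schlafliTerm_three_four,
            schlafliTerm_four_three] at heq <;> linarith)
  · rintro (⟨rfl, rfl, rfl, rfl⟩ | ⟨rfl, rfl, rfl, rfl⟩ | ⟨rfl, rfl, rfl, rfl⟩) <;>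
      norm_num [schlafliTerm_three_three, schlafliTerm_three_four, schlafliTerm_four_three]
end
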